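/- arXiv:1705.01866 — 4 statements merged into one kernel-verified Lean document; each statement's English description precedes it below -/
import Mathlib

section
/- Let A = diag(a₁,a₂,a₃) with a₁,a₂,a₃ distinct, and define for γ ∈ ℝ³ with (γ,γ)=1 the matrix A'_γ = A + d g² B_γ where B_γ = diag((a₁−a₃)(a₁−a₂)γ₁², (a₂−a₃)(a₂−a₁)γ₂², (a₃−a₁)(a₃−a₂)γ₃²) and g² = 1/(1 − d(γ,Aγ)). Then for any M ∈ ℝ³ with (γ,M)=0, one has (A_γ M, M) = (A'_γ M, M), where A_γ M = A M + d g² (γ, A M) A γ. -/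
/-- Chaplygin's diagonalization: on (γ,γ)=1, (γ,M)=0 one has
(A_γ M, M) = (A'_γ M, M) with A'_γ = A + d g² B_γ diagonal. -/
theorem stmt_3 (a1 a2 a3 d γ1 γ2 γ3 M1 M2 M3 g2 : ℝ)
    (h12 : a1 ≠ a2) (h13 : a1 ≠ a3) (h23 : a2 ≠ a3)
    (hden : 1 - d * (a1 * γ1^2 + a2 * γ2^2 + a3 * γ3^2) ≠ 0)
    (hg2 : g2 = 1 / (1 - d * (a1 * γ1^2 + a2 * γ2^2 + a3 * γ3^2)))
    (hγ : γ1^2 + γ2^2 + γ3^2 = 1)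
    (hortho : γ1 * M1 + γ2 * M2 + γ3 * M3 = 0) :
    (a1 * M1^2 + a2 * M2^2 + a3 * M3^2) +
      d * g2 * (a1 * γ1 * M1 + a2 * γ2 * M2 + a3 * γ3 * M3)^2 =
    (a1 + d * g2 * (a1 - a3) * (a1 - a2) * γ1^2) * M1^2 +
    (a2 + d * g2 * (a2 - a3) * (a2 - a1) * γ2^2) * M2^2 +
    (a3 + d * g2 * (a3 - a1) * (a3 - a2) * γ3^2) * M3^2 := by
  linear_combination (d * g2 * (a2*a3*γ3*M3 + a2*a3*γ2*M2 - a2*a3*γ1*M1 +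
    a1*a3*γ3*M3 - a1*a3*γ2*M2 + a1*a3*γ1*M1 - a1*a2*γ3*M3 + a1*a2*γ2*M2 + a1*a2*γ1*M1)) * hortho
end

section
/- Let a₁,a₂,a₃ be distinct, d ∈ ℝ, and u₁ ≠ u₂. With γᵢ defined as in the sphero-conical parametrization and Mᵢ = (2 ε_{ijk} γⱼ γ_k (a_j − a_k) g / (u₁ − u₂)) · ((aᵢ−u₁)(1−d u₁) p_{u₁} − (aᵢ−u₂)(1−d u₂) p_{u₂}), where g = √(((1−d u₁)(1−d u₂))/((1−d a₁)(1−d a₂)(1−d a₃))), one has (γ, M) = γ₁M₁ + γ₂M₂ + γ₃M₃ = 0. -/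
/-- In the sphero-conical parametrization of the Chaplygin ball one has (γ,M) = 0. -/
theorem stmt_5 (a1 a2 a3 d u1 u2 p1 p2 : ℝ)
    (h12 : a1 ≠ a2) (h13 : a1 ≠ a3) (h23 : a2 ≠ a3) (hu : u1 ≠ u2)
    (hd1 : d * u1 ≠ 1) (hd2 : d * u2 ≠ 1)
    (hgrad : ((1 - d * u1) * (1 - d * u2)) / ((1 - d * a1) * (1 - d * a2) * (1 - d * a3)) ≥ 0)
    (g : ℝ)
    (hg : g = Real.sqrt (((1 - d * u1) * (1 - d * u2)) /
        ((1 - d * a1) * (1 - d * a2) * (1 - d * a3))))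
    (hr1 : ((1 - d * a2) * (1 - d * a3)) / ((1 - d * u1) * (1 - d * u2)) ≥ 0)
    (hr2 : ((1 - d * a1) * (1 - d * a3)) / ((1 - d * u1) * (1 - d * u2)) ≥ 0)
    (hr3 : ((1 - d * a1) * (1 - d * a2)) / ((1 - d * u1) * (1 - d * u2)) ≥ 0)
    (hs1 : ((u1 - a1) * (u2 - a1)) / ((a2 - a1) * (a3 - a1)) ≥ 0)
    (hs2 : ((u1 - a2) * (u2 - a2)) / ((a1 - a2) * (a3 - a2)) ≥ 0)
    (hs3 : ((u1 - a3) * (u2 - a3)) / ((a1 - a3) * (a2 - a3)) ≥ 0)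
    (γ1 γ2 γ3 M1 M2 M3 : ℝ)
    (hγ1 : γ1 = Real.sqrt (((1 - d * a2) * (1 - d * a3)) / ((1 - d * u1) * (1 - d * u2))) *
        Real.sqrt (((u1 - a1) * (u2 - a1)) / ((a2 - a1) * (a3 - a1))))
    (hγ2 : γ2 = Real.sqrt (((1 - d * a1) * (1 - d * a3)) / ((1 - d * u1) * (1 - d * u2))) *
        Real.sqrt (((u1 - a2) * (u2 - a2)) / ((a1 - a2) * (a3 - a2))))
    (hγ3 : γ3 = Real.sqrt (((1 - d * a1) * (1 - d * a2)) / ((1 - d * u1) * (1 - d * u2))) *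
        Real.sqrt (((u1 - a3) * (u2 - a3)) / ((a1 - a3) * (a2 - a3))))
    (hM1 : M1 = 2 * γ2 * γ3 * (a2 - a3) * g / (u1 - u2) *
        ((a1 - u1) * (1 - d * u1) * p1 - (a1 - u2) * (1 - d * u2) * p2))
    (hM2 : M2 = 2 * γ3 * γ1 * (a3 - a1) * g / (u1 - u2) *
        ((a2 - u1) * (1 - d * u1) * p1 - (a2 - u2) * (1 - d * u2) * p2))
    (hM3 : M3 = 2 * γ1 * γ2 * (a1 - a2) * g / (u1 - u2) *
        ((a3 - u1) * (1 - d * u1) * p1 - (a3 - u2) * (1 - d * u2) * p2)) :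
    γ1 * M1 + γ2 * M2 + γ3 * M3 = 0 := by
  subst hM1 hM2 hM3; ring
end

section
/- Let γ, M ∈ ℝ³ with (γ,γ) = 1, (γ,M) = 0, M ≠ 0, and γᵢ ≠ 0 for all i. Define γ̃ᵢ ≥ 0 with γ̃ᵢ² = (Mⱼ² + M_k²)/(M,M) − γᵢ², assumed positive for each i, and define M̃₁ = −((γ̃₂²+γ̃₃²)γ₂γ₃M₁)/(γ̃₂γ̃₃) + γ₁γ̃₂γ₃M₂/γ̃₃ + γ₁γ₂γ̃₃M₃/γ̃₂, with M̃₂, M̃₃ given by cyclic analogues. Then M̃₁² + M̃₂² + M̃₃² = M₁² + M₂² + M₃². -/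
/-- The d = 0 Bäcklund transformation preserves H₂ = (M,M). -/
theorem stmt_12 (γ1 γ2 γ3 M1 M2 M3 t1 t2 t3 N1 N2 N3 : ℝ)
    (hγ : γ1^2 + γ2^2 + γ3^2 = 1)
    (hortho : γ1 * M1 + γ2 * M2 + γ3 * M3 = 0)
    (hM : M1^2 + M2^2 + M3^2 ≠ 0)
    (hγ1 : γ1 ≠ 0) (hγ2 : γ2 ≠ 0) (hγ3 : γ3 ≠ 0)
    (ht1pos : t1 > 0) (ht2pos : t2 > 0) (ht3pos : t3 > 0)
    (ht1 : t1^2 = (M2^2 + M3^2) / (M1^2 + M2^2 + M3^2) - γ1^2)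
    (ht2 : t2^2 = (M1^2 + M3^2) / (M1^2 + M2^2 + M3^2) - γ2^2)
    (ht3 : t3^2 = (M1^2 + M2^2) / (M1^2 + M2^2 + M3^2) - γ3^2)
    (hN1 : N1 = -((t2^2 + t3^2) * γ2 * γ3 * M1) / (t2 * t3)
      + γ1 * t2 * γ3 * M2 / t3 + γ1 * γ2 * t3 * M3 / t2)
    (hN2 : N2 = t1 * γ2 * γ3 * M1 / t3
      - ((t1^2 + t3^2) * γ1 * γ3 * M2) / (t1 * t3) + γ1 * γ2 * t3 * M3 / t1)
    (hN3 : N3 = t1 * γ2 * γ3 * M1 / t2 + γ1 * t2 * γ3 * M2 / t1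
      - ((t1^2 + t2^2) * γ1 * γ2 * M3) / (t1 * t2)) :
    N1^2 + N2^2 + N3^2 = M1^2 + M2^2 + M3^2 := by
  set s : ℝ := M1^2 + M2^2 + M3^2 with hs
  have ht1' : t1 ≠ 0 := ne_of_gt ht1pos
  have ht2' : t2 ≠ 0 := ne_of_gt ht2pos
  have ht3' : t3 ≠ 0 := ne_of_gt ht3pos
  -- (γ × M)_i components
  set P1 : ℝ := γ2*M3 - γ3*M2 with hP1
  set P2 : ℝ := γ3*M1 - γ1*M3 with hP2
  set P3 : ℝ := γ1*M2 - γ2*M1 with hP3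
  have e1 : t1^2 * s = P1^2 := by
    rw [ht1, hP1]; field_simp
    linear_combination (-(M2^2 + M3^2)) * hγ + (γ2*M2 + γ3*M3 - γ1*M1) * hortho
  have e2 : t2^2 * s = P2^2 := by
    rw [ht2, hP2]; field_simp
    linear_combination (-(M1^2 + M3^2)) * hγ + (γ1*M1 + γ3*M3 - γ2*M2) * hortho
  have e3 : t3^2 * s = P3^2 := by
    rw [ht3, hP3]; field_simp
    linear_combination (-(M1^2 + M2^2)) * hγ + (γ1*M1 + γ2*M2 - γ3*M3) * hortho
  have hL1 : N1 * (t2*t3) = -(t2^2+t3^2)*γ2*γ3*M1 + γ1*γ3*M2*t2^2 + γ1*γ2*M3*t3^2 := by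
    rw [hN1]; field_simp
  have hL2 : N2 * (t1*t3) = γ2*γ3*M1*t1^2 - (t1^2+t3^2)*γ1*γ3*M2 + γ1*γ2*M3*t3^2 := by
    rw [hN2]; field_simp
  have hL3 : N3 * (t1*t2) = γ2*γ3*M1*t1^2 + γ1*γ3*M2*t2^2 - (t1^2+t2^2)*γ1*γ2*M3 := by
    rw [hN3]; field_simp
  have hX1 : N1 * (t2*t3) * s = P2 * P3 * M1 := by
    rw [hP2, hP3]
    linear_combination s * hL1 + (γ1*γ3*M2 - γ2*γ3*M1) * e2 + (γ1*γ2*M3 - γ2*γ3*M1) * e3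
      + (P2*P3*M1) * hγ - (P2*P3*γ1) * hortho
  have hX2 : N2 * (t1*t3) * s = P1 * P3 * M2 := by
    rw [hP1, hP3]
    linear_combination s * hL2 + (γ2*γ3*M1 - γ1*γ3*M2) * e1 + (γ1*γ2*M3 - γ1*γ3*M2) * e3
      + (P1*P3*M2) * hγ - (P1*P3*γ2) * hortho
  have hX3 : N3 * (t1*t2) * s = P1 * P2 * M3 := by
    rw [hP1, hP2]
    linear_combination s * hL3 + (γ2*γ3*M1 - γ1*γ2*M3) * e1 + (γ1*γ3*M2 - γ1*γ2*M3) * e2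
      + (P1*P2*M3) * hγ - (P1*P2*γ3) * hortho
  have hc : ∀ a b : ℝ, a ≠ 0 → b ≠ 0 → ∀ N P Q M : ℝ,
      N * (a*b) * s = P * Q * M → a^2 * s = P^2 → b^2 * s = Q^2 → N^2 = M^2 := by
    intro a b ha hb N P Q M hX ea eb
    have hns : (a*b*s)^2 ≠ 0 := by positivity
    have hq : N^2 * (a*b*s)^2 = M^2 * (a*b*s)^2 := by
      linear_combination (N*(a*b)*s + P*Q*M) * hX - (M^2*b^2*s) * ea - (M^2*P^2) * eb
    exact mul_right_cancel₀ hns hq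
  have h1 : N1^2 = M1^2 := hc t2 t3 ht2' ht3' N1 P2 P3 M1 hX1 e2 e3
  have h2 : N2^2 = M2^2 := hc t1 t3 ht1' ht3' N2 P1 P3 M2 hX2 e1 e3
  have h3 : N3^2 = M3^2 := hc t1 t2 ht1' ht2' N3 P1 P2 M3 hX3 e1 e2
  rw [h1, h2, h3]
end

section
/- Let a₁,a₂,a₃ be distinct reals, u₁ ≠ u₂ not equal to any aᵢ, and define γ and M via the elliptic parametrization: γᵢ = √(((u₁−aᵢ)(u₂−aᵢ))/((a_j−aᵢ)(a_k−aᵢ))) and Mᵢ = (2ε_{ijk}γⱼγ_k(a_j−a_k)/(u₁−u₂))((aᵢ−u₁)p_{u₁} − (aᵢ−u₂)p_{u₂}). Then H₁ = M₁²+M₂²+M₃² = φ₁p_{u₁}²/(u₁−u₂) + φ₂p_{u₂}²/(u₂−u₁), where φ_k = 4(a₁−u_k)(a₂−u_k)(a₃−u_k). -/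
set_option linter.unusedVariables false

set_option maxHeartbeats 1600000 in
/-- Free motion on the sphere in elliptic coordinates:
(M,M) = φ₁p₁²/(u₁−u₂) + φ₂p₂²/(u₂−u₁). -/
theorem stmt_18 (a1 a2 a3 u1 u2 p1 p2 : ℝ)
    (h12 : a1 ≠ a2) (h13 : a1 ≠ a3) (h23 : a2 ≠ a3) (hu : u1 ≠ u2)
    (hu1a : u1 ≠ a1 ∧ u1 ≠ a2 ∧ u1 ≠ a3) (hu2a : u2 ≠ a1 ∧ u2 ≠ a2 ∧ u2 ≠ a3)
    (hs1 : ((u1 - a1) * (u2 - a1)) / ((a2 - a1) * (a3 - a1)) ≥ 0)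
    (hs2 : ((u1 - a2) * (u2 - a2)) / ((a1 - a2) * (a3 - a2)) ≥ 0)
    (hs3 : ((u1 - a3) * (u2 - a3)) / ((a1 - a3) * (a2 - a3)) ≥ 0)
    (γ1 γ2 γ3 M1 M2 M3 : ℝ)
    (hγ1 : γ1 = Real.sqrt (((u1 - a1) * (u2 - a1)) / ((a2 - a1) * (a3 - a1))))
    (hγ2 : γ2 = Real.sqrt (((u1 - a2) * (u2 - a2)) / ((a1 - a2) * (a3 - a2))))
    (hγ3 : γ3 = Real.sqrt (((u1 - a3) * (u2 - a3)) / ((a1 - a3) * (a2 - a3))))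
    (hM1 : M1 = 2 * γ2 * γ3 * (a2 - a3) / (u1 - u2) *
      ((a1 - u1) * p1 - (a1 - u2) * p2))
    (hM2 : M2 = 2 * γ3 * γ1 * (a3 - a1) / (u1 - u2) *
      ((a2 - u1) * p1 - (a2 - u2) * p2))
    (hM3 : M3 = 2 * γ1 * γ2 * (a1 - a2) / (u1 - u2) *
      ((a3 - u1) * p1 - (a3 - u2) * p2)) :
    M1^2 + M2^2 + M3^2 =
      4 * (a1 - u1) * (a2 - u1) * (a3 - u1) * p1^2 / (u1 - u2) +
      4 * (a1 - u2) * (a2 - u2) * (a3 - u2) * p2^2 / (u2 - u1) := by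
  have d12 : a1 - a2 ≠ 0 := sub_ne_zero.mpr h12
  have d13 : a1 - a3 ≠ 0 := sub_ne_zero.mpr h13
  have d23 : a2 - a3 ≠ 0 := sub_ne_zero.mpr h23
  have d21 : a2 - a1 ≠ 0 := sub_ne_zero.mpr h12.symm
  have d31 : a3 - a1 ≠ 0 := sub_ne_zero.mpr h13.symm
  have d32 : a3 - a2 ≠ 0 := sub_ne_zero.mpr h23.symm
  have du : u1 - u2 ≠ 0 := sub_ne_zero.mpr hu
  have du' : u2 - u1 ≠ 0 := sub_ne_zero.mpr hu.symm
  have hg1 : γ1 ^ 2 * ((a2 - a1) * (a3 - a1)) = (u1 - a1) * (u2 - a1) := by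
    rw [hγ1, sq, Real.mul_self_sqrt hs1, div_mul_cancel₀ _ (mul_ne_zero d21 d31)]
  have hg2 : γ2 ^ 2 * ((a1 - a2) * (a3 - a2)) = (u1 - a2) * (u2 - a2) := by
    rw [hγ2, sq, Real.mul_self_sqrt hs2, div_mul_cancel₀ _ (mul_ne_zero d12 d32)]
  have hg3 : γ3 ^ 2 * ((a1 - a3) * (a2 - a3)) = (u1 - a3) * (u2 - a3) := by
    rw [hγ3, sq, Real.mul_self_sqrt hs3, div_mul_cancel₀ _ (mul_ne_zero d13 d23)]
  have E1 : M1 * (u1 - u2) =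
      2 * γ2 * γ3 * (a2 - a3) * ((a1 - u1) * p1 - (a1 - u2) * p2) := by
    rw [hM1]; field_simp
  have E2 : M2 * (u1 - u2) =
      2 * γ3 * γ1 * (a3 - a1) * ((a2 - u1) * p1 - (a2 - u2) * p2) := by
    rw [hM2]; field_simp
  have E3 : M3 * (u1 - u2) =
      2 * γ1 * γ2 * (a1 - a2) * ((a3 - u1) * p1 - (a3 - u2) * p2) := by
    rw [hM3]; field_simp
  have m1 : M1 ^ 2 * ((u1 - u2) ^ 2 *
      (((a1 - a2) * (a3 - a2)) * ((a1 - a3) * (a2 - a3)))) =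
      4 * (a2 - a3) ^ 2 * ((a1 - u1) * p1 - (a1 - u2) * p2) ^ 2 *
        ((u1 - a2) * (u2 - a2)) * ((u1 - a3) * (u2 - a3)) := by
    linear_combination
      ((M1 * (u1 - u2) + 2 * γ2 * γ3 * (a2 - a3) * ((a1 - u1) * p1 - (a1 - u2) * p2)) *
        (((a1 - a2) * (a3 - a2)) * ((a1 - a3) * (a2 - a3)))) * E1 +
      (4 * (a2 - a3) ^ 2 * ((a1 - u1) * p1 - (a1 - u2) * p2) ^ 2 * γ3 ^ 2 *
        ((a1 - a3) * (a2 - a3))) * hg2 +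
      (4 * (a2 - a3) ^ 2 * ((a1 - u1) * p1 - (a1 - u2) * p2) ^ 2 *
        ((u1 - a2) * (u2 - a2))) * hg3
  have m2 : M2 ^ 2 * ((u1 - u2) ^ 2 *
      (((a2 - a1) * (a3 - a1)) * ((a1 - a3) * (a2 - a3)))) =
      4 * (a3 - a1) ^ 2 * ((a2 - u1) * p1 - (a2 - u2) * p2) ^ 2 *
        ((u1 - a3) * (u2 - a3)) * ((u1 - a1) * (u2 - a1)) := by
    linear_combination
      ((M2 * (u1 - u2) + 2 * γ3 * γ1 * (a3 - a1) * ((a2 - u1) * p1 - (a2 - u2) * p2)) *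
        (((a2 - a1) * (a3 - a1)) * ((a1 - a3) * (a2 - a3)))) * E2 +
      (4 * (a3 - a1) ^ 2 * ((a2 - u1) * p1 - (a2 - u2) * p2) ^ 2 * γ1 ^ 2 *
        ((a2 - a1) * (a3 - a1))) * hg3 +
      (4 * (a3 - a1) ^ 2 * ((a2 - u1) * p1 - (a2 - u2) * p2) ^ 2 *
        ((u1 - a3) * (u2 - a3))) * hg1
  have m3 : M3 ^ 2 * ((u1 - u2) ^ 2 *
      (((a2 - a1) * (a3 - a1)) * ((a1 - a2) * (a3 - a2)))) =
      4 * (a1 - a2) ^ 2 * ((a3 - u1) * p1 - (a3 - u2) * p2) ^ 2 *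
        ((u1 - a1) * (u2 - a1)) * ((u1 - a2) * (u2 - a2)) := by
    linear_combination
      ((M3 * (u1 - u2) + 2 * γ1 * γ2 * (a1 - a2) * ((a3 - u1) * p1 - (a3 - u2) * p2)) *
        (((a2 - a1) * (a3 - a1)) * ((a1 - a2) * (a3 - a2)))) * E3 +
      (4 * (a1 - a2) ^ 2 * ((a3 - u1) * p1 - (a3 - u2) * p2) ^ 2 * γ2 ^ 2 *
        ((a1 - a2) * (a3 - a2))) * hg1 +
      (4 * (a1 - a2) ^ 2 * ((a3 - u1) * p1 - (a3 - u2) * p2) ^ 2 *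
        ((u1 - a1) * (u2 - a1))) * hg2
  rw [div_add_div _ _ du du', eq_div_iff (mul_ne_zero du du')]
  refine mul_right_cancel₀
    (mul_ne_zero (mul_ne_zero (mul_ne_zero d21 d31) (mul_ne_zero d12 d32))
      (mul_ne_zero d13 d23) :
      ((a2 - a1) * (a3 - a1)) * ((a1 - a2) * (a3 - a2)) * ((a1 - a3) * (a2 - a3)) ≠ 0) ?_
  linear_combination (-((a2 - a1) * (a3 - a1))) * m1 - ((a1 - a2) * (a3 - a2)) * m2 -
    ((a1 - a3) * (a2 - a3)) * m3
end
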